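/- Let C be a signed graph on m ≥ 3 vertices whose underlying graph is a cycle of length m (so its edges form a single chordless cycle), and suppose C has an even number of dotted edges. Then the quadratic form q_C is not positive definite; in fact there exists a nonzero vector z ∈ ℤ^m with q_C(z) = 0. -/

import Mathlib

open Finset

/-- A sign matrix encodes a signed graph: `a i j = 1` if `{i,j}` is a dotted edge,
`a i j = -1` if `{i,j}` is a solid edge, and `a i j = 0` if there is no edge. -/
def IsSignMatrix {n : ℕ} (a : Fin n → Fin n → ℤ) : Prop :=
  (∀ i j, a j i = a i j) ∧ (∀ i, a i i = 0) ∧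
    (∀ i j, a i j = -1 ∨ a i j = 0 ∨ a i j = 1)

/-- The quadratic form of a signed graph with sign matrix `a`:
`q(x) = Σ_i x_i² + Σ_{i<j} a_{ij} x_i x_j`. -/
def sgnForm {n : ℕ} (a : Fin n → Fin n → ℤ) (x : Fin n → ℤ) : ℤ :=
  (∑ i, x i ^ 2) + ∑ i, ∑ j, if i < j then a i j * (x i * x j) else 0

/-- The number of dotted edges of the cycle parametrized by `c`. -/
def dottedCount {n m : ℕ} (a : Fin n → Fin n → ℤ) (c : Fin (m + 3) → Fin n) : ℕ :=
  (Finset.univ.filter fun k : Fin (m + 3) => a (c k) (c (k + 1)) = 1).card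

/-!
Along the cycle `c 0, c 1, …` let `s k = ±1` be the sign of the `k`-th edge. Choosing
`y (k + 1) = -s k * y k` starting from `y 0 = 1` closes up around the cycle exactly when
`∏ (-s k) = 1`, i.e. when the number of dotted edges is even. Then every edge term
`s k * y k * y (k + 1)` equals `-1`, so for `z = y ∘ c⁻¹` the `m + 3` edge terms cancel the
`m + 3` squares and `q(z) = 0`.
-/

theorem Fin.exists_add_one_eq_mul_of_prod_eq_one {M : Type*} [CommMonoid M] {n : ℕ}
    (t : Fin (n + 1) → M) (ht : ∏ k, t k = 1) :
    ∃ y : Fin (n + 1) → M, ∀ k, y (k + 1) = y k * t k := by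
  refine ⟨Fin.partialProd fun j : Fin n => t j.castSucc, fun k => ?_⟩
  induction k using Fin.lastCases with
  | last =>
    rw [Fin.last_add_one, Fin.partialProd_zero, ← ht, Fin.prod_univ_castSucc]
    simp [Fin.partialProd, List.take_of_length_le, List.prod_ofFn]
  | cast j => rw [Fin.coeSucc_eq_succ, Fin.partialProd_succ]

theorem Int.prod_neg_units {ι : Type*} (s : Finset ι) (u : ι → ℤˣ) :
    ∏ i ∈ s, -u i = (-1) ^ #{i ∈ s | u i = 1} := by
  have hneg : ∀ i, -u i = if u i = 1 then -1 else 1 := fun i => by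
    rcases Int.units_eq_one_or (u i) with h | h <;> simp [h]
  simp only [hneg, Finset.prod_ite, Finset.prod_const, one_pow, mul_one]

theorem IsSignMatrix.isUnit_of_ne_zero {n : ℕ} {a : Fin n → Fin n → ℤ} (ha : IsSignMatrix a)
    {i j : Fin n} (hij : a i j ≠ 0) : IsUnit (a i j) := by
  rcases ha.2.2 i j with h | h | h
  · exact Int.isUnit_iff.2 (Or.inr h)
  · exact absurd h hij
  · exact Int.isUnit_iff.2 (Or.inl h)

theorem two_mul_sgnForm {n : ℕ} {a : Fin n → Fin n → ℤ} (hsymm : ∀ i j, a j i = a i j)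
    (hdiag : ∀ i, a i i = 0) (x : Fin n → ℤ) :
    2 * sgnForm a x = 2 * ∑ i, x i ^ 2 + ∑ i, ∑ j, a i j * (x i * x j) := by
  set T := ∑ i, ∑ j, if i < j then a i j * (x i * x j) else 0
  have hsplit : ∀ i j, a i j * (x i * x j) = (if i < j then a i j * (x i * x j) else 0) +
      if j < i then a j i * (x j * x i) else 0 := fun i j => by
    rcases lt_trichotomy i j with h | rfl | h
    · simp [h, h.not_gt]
    · simp [hdiag]
    · simp [h, h.not_gt, hsymm i j, mul_comm (x i)]
  have hdouble : ∑ i, ∑ j, a i j * (x i * x j) = T + T := by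
    rw [Fintype.sum_congr _ _ fun i => Fintype.sum_congr _ _ (hsplit i)]
    simp only [Finset.sum_add_distrib]
    rw [Finset.sum_comm (f := fun i j => if j < i then a j i * (x j * x i) else 0)]
  rw [sgnForm, hdouble]
  ring

theorem Fin.sum_sum_eq_two_mul_sum_of_adj_cycle {m : ℕ} (b : Fin (m + 3) → Fin (m + 3) → ℤ)
    (hsymm : ∀ k l, b l k = b k l) (hadj : ∀ k l, b k l ≠ 0 → l = k + 1 ∨ k = l + 1)
    (y : Fin (m + 3) → ℤ) :
    ∑ k, ∑ l, b k l * (y k * y l) = 2 * ∑ k, b k (k + 1) * (y k * y (k + 1)) := by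
  have hne : ∀ k : Fin (m + 3), k + 1 ≠ k - 1 := fun k => by
    rw [sub_eq_add_neg, Ne, add_right_inj, Fin.ext_iff]
    simp [Fin.val_neg]
  have hrow : ∀ k, ∑ l, b k l * (y k * y l) =
      b k (k + 1) * (y k * y (k + 1)) + b k (k - 1) * (y k * y (k - 1)) := fun k => by
    rw [← Finset.sum_subset (Finset.subset_univ {k + 1, k - 1}) fun l _ hl => ?_,
      Finset.sum_pair (hne k)]
    have hbkl : b k l = 0 := by
      by_contra h
      rcases hadj k l h with rfl | rfl <;> simp at hl
    rw [hbkl, zero_mul]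
  have hback : ∑ k, b k (k - 1) * (y k * y (k - 1)) = ∑ k, b k (k + 1) * (y k * y (k + 1)) := by
    rw [← Equiv.sum_comp (Equiv.addRight (1 : Fin (m + 3)))]
    simp only [Equiv.coe_addRight, add_sub_cancel_right, hsymm, mul_comm (y (_ + 1))]
  rw [Finset.sum_congr rfl fun k _ => hrow k, Finset.sum_add_distrib, hback, two_mul]

theorem sgnForm_eq_of_adj_cycle {m : ℕ} {a : Fin (m + 3) → Fin (m + 3) → ℤ}
    (ha : IsSignMatrix a) {c : Fin (m + 3) → Fin (m + 3)} (hc : Function.Bijective c)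
    (hadj : ∀ k l, a (c k) (c l) ≠ 0 → l = k + 1 ∨ k = l + 1) (x : Fin (m + 3) → ℤ) :
    sgnForm a x = ∑ i, x i ^ 2 + ∑ k, a (c k) (c (k + 1)) * (x (c k) * x (c (k + 1))) := by
  have hreindex :
      ∑ i, ∑ j, a i j * (x i * x j) = ∑ k, ∑ l, a (c k) (c l) * (x (c k) * x (c l)) := by
    rw [← hc.sum_comp]
    exact Fintype.sum_congr _ _ fun k => (hc.sum_comp _).symm
  have h2 := two_mul_sgnForm ha.1 ha.2.1 x
  rw [hreindex, Fin.sum_sum_eq_two_mul_sum_of_adj_cycle _ (fun k l => ha.1 _ _) hadj] at h2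
  linarith

open Fin.NatCast in
/-- a signed graph on `m + 3 ≥ 3` vertices whose underlying graph is a
cycle through all the vertices (adjacency holds exactly between cyclically consecutive
vertices) and which has an even number of dotted edges has a nonzero isotropic vector;
in particular its quadratic form is not positive definite. -/
theorem cycle_even_dotted_not_posDef {m : ℕ}
    (a : Fin (m + 3) → Fin (m + 3) → ℤ) (ha : IsSignMatrix a)
    (c : Fin (m + 3) → Fin (m + 3)) (hc : Function.Bijective c)
    (hcyc : ∀ k l : Fin (m + 3), a (c k) (c l) ≠ 0 ↔ (l = k + 1 ∨ k = l + 1))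
    (heven : Even (dottedCount a c)) :
    (¬ ∀ x : Fin (m + 3) → ℤ, x ≠ 0 → 0 < sgnForm a x) ∧
      ∃ z : Fin (m + 3) → ℤ, z ≠ 0 ∧ sgnForm a z = 0 := by
  have hunit k := ha.isUnit_of_ne_zero ((hcyc k (k + 1)).2 (Or.inl rfl))
  let s : Fin (m + 3) → ℤˣ := fun k => (hunit k).unit
  have hdotted : #{k | s k = 1} = dottedCount a c := by
    simp only [dottedCount, ← Units.val_eq_one, s, IsUnit.unit_spec]
  have hbalanced : ∏ k, -s k = 1 := by
    rw [Int.prod_neg_units, hdotted, heven.neg_one_pow]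
  obtain ⟨y, hy⟩ := Fin.exists_add_one_eq_mul_of_prod_eq_one _ hbalanced
  have hedge k : s k * y k * y (k + 1) = -1 := by
    rw [hy, mul_neg, mul_neg, mul_comm (y k) (s k), Int.units_mul_self]
  let z : Fin (m + 3) → ℤ := fun i => y ((Equiv.ofBijective c hc).symm i)
  have hz k : z (c k) = y k := by simp [z]
  have hsq i : z i ^ 2 = 1 := by simp [z, ← Units.val_pow_eq_pow_val, Int.units_sq]
  have hterm k : a (c k) (c (k + 1)) * (z (c k) * z (c (k + 1))) = -1 := by
    simpa [hz, s, mul_assoc] using congrArg Units.val (hedge k)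
  have hq : sgnForm a z = 0 := by
    simp [sgnForm_eq_of_adj_cycle ha hc fun k l => (hcyc k l).1, hsq, hterm]
  have hz0 : z ≠ 0 := fun h => (y 0).ne_zero (by simpa [hz] using congrFun h (c 0))
  exact ⟨fun hpos => (hpos z hz0).ne' hq, z, hz0, hq⟩
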